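/- For the biderivation Γ₂ on ℝ[θ₁,θ₂,η] determined by the matrix of the cyclic group model (Γ₂(θ₁,θ₁)=1−θ₁², Γ₂(θ₁,θ₂)=−nθ₁θ₂, Γ₂(θ₁,η)=−nθ₁η, Γ₂(θ₂,θ₂)=n²((1−θ₁²)^{n−1}−θ₂²), Γ₂(θ₂,η)=−n²θ₂η, Γ₂(η,η)=n²((1−θ₁²)^{n−1}−η²)), the polynomial P = (1−θ₁²)ⁿ − θ₂² − η² satisfies Γ₂(θ₁,P) = −2nθ₁P, Γ₂(θ₂,P) = −2n²θ₂P, Γ₂(η,P) = −2n²ηP. -/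

import Mathlib

/-!
With `∂₀P = -2nθ₁(1-θ₁²)^(n-1)`, `∂₁P = -2θ₂`, `∂₂P = -2η`, each identity is a polynomial
identity once `n(1-θ₁²)^(n-1)·(1-θ₁²)` is replaced by `n(1-θ₁²)^n`.
-/

open MvPolynomial

/-- The factor `n` absorbs the truncated subtraction `0 - 1 = 0` at `n = 0`. -/
theorem natCast_mul_pow_sub_one_mul {R : Type*} [CommSemiring R] (n : ℕ) (a : R) :
    (n : R) * (a ^ (n - 1) * a) = n * a ^ n := by
  cases n with
  | zero => simp
  | succ k => rw [Nat.add_sub_cancel, ← pow_succ]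

section CyclicModel

variable {R : Type*} [CommRing R] (n : ℕ)

theorem pderiv_zero_one_sub_sq_pow_sub_sq_sub_sq :
    pderiv 0 ((1 - X 0 ^ 2) ^ n - X 1 ^ 2 - X 2 ^ 2 : MvPolynomial (Fin 3) R) =
      -2 * (n : MvPolynomial (Fin 3) R) * X 0 * (1 - X 0 ^ 2) ^ (n - 1) := by
  simp only [map_sub, Derivation.leibniz_pow, pderiv_X_self,
    pderiv_X_of_ne (by decide : (1 : Fin 3) ≠ 0), pderiv_X_of_ne (by decide : (2 : Fin 3) ≠ 0),
    Derivation.map_one_eq_zero, nsmul_eq_mul, smul_eq_mul]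
  ring

theorem pderiv_one_one_sub_sq_pow_sub_sq_sub_sq :
    pderiv 1 ((1 - X 0 ^ 2) ^ n - X 1 ^ 2 - X 2 ^ 2 : MvPolynomial (Fin 3) R) = -2 * X 1 := by
  simp only [map_sub, Derivation.leibniz_pow, pderiv_X_self,
    pderiv_X_of_ne (by decide : (0 : Fin 3) ≠ 1), pderiv_X_of_ne (by decide : (2 : Fin 3) ≠ 1),
    Derivation.map_one_eq_zero, nsmul_eq_mul, smul_eq_mul]
  ring

theorem pderiv_two_one_sub_sq_pow_sub_sq_sub_sq :
    pderiv 2 ((1 - X 0 ^ 2) ^ n - X 1 ^ 2 - X 2 ^ 2 : MvPolynomial (Fin 3) R) = -2 * X 2 := by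
  simp only [map_sub, Derivation.leibniz_pow, pderiv_X_self,
    pderiv_X_of_ne (by decide : (0 : Fin 3) ≠ 2), pderiv_X_of_ne (by decide : (1 : Fin 3) ≠ 2),
    Derivation.map_one_eq_zero, nsmul_eq_mul, smul_eq_mul]
  ring

end CyclicModel

theorem stmt6_general (n : ℕ) :
    let R := MvPolynomial (Fin 3) ℝ
    let θ₁ : MvPolynomial (Fin 3) ℝ := X 0
    let θ₂ : MvPolynomial (Fin 3) ℝ := X 1
    let η : MvPolynomial (Fin 3) ℝ := X 2
    let N : MvPolynomial (Fin 3) ℝ := (n : MvPolynomial (Fin 3) ℝ)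
    let g11 := 1 - θ₁ ^ 2
    let g12 := -N * θ₁ * θ₂
    let g13 := -N * θ₁ * η
    let g22 := N ^ 2 * ((1 - θ₁ ^ 2) ^ (n - 1) - θ₂ ^ 2)
    let g23 := -N ^ 2 * θ₂ * η
    let g33 := N ^ 2 * ((1 - θ₁ ^ 2) ^ (n - 1) - η ^ 2)
    let P : MvPolynomial (Fin 3) ℝ := (1 - θ₁ ^ 2) ^ n - θ₂ ^ 2 - η ^ 2
    g11 * pderiv 0 P + g12 * pderiv 1 P + g13 * pderiv 2 P = -2 * N * θ₁ * P ∧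
    g12 * pderiv 0 P + g22 * pderiv 1 P + g23 * pderiv 2 P = -2 * N ^ 2 * θ₂ * P ∧
    g13 * pderiv 0 P + g23 * pderiv 1 P + g33 * pderiv 2 P = -2 * N ^ 2 * η * P := by
  intro R θ₁ θ₂ η N g11 g12 g13 g22 g23 g33 P
  have hP0 := pderiv_zero_one_sub_sq_pow_sub_sq_sub_sq (R := ℝ) n
  have hP1 := pderiv_one_one_sub_sq_pow_sub_sq_sub_sq (R := ℝ) n
  have hP2 := pderiv_two_one_sub_sq_pow_sub_sq_sub_sq (R := ℝ) n
  have hpow := natCast_mul_pow_sub_one_mul n (1 - θ₁ ^ 2 : MvPolynomial (Fin 3) ℝ)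
  simp only [g11, g12, g13, g22, g23, g33, P, N, θ₁, θ₂, η, hP0, hP1, hP2] at hpow ⊢
  refine ⟨?_, ?_, ?_⟩
  · linear_combination (-2 * X 0) * hpow
  · linear_combination (-2 * (n : MvPolynomial (Fin 3) ℝ) * X 1) * hpow
  · linear_combination (-2 * (n : MvPolynomial (Fin 3) ℝ) * X 2) * hpow

/-- For the biderivation `Γ₂` on `ℝ[θ₁,θ₂,η]` determined by its values on generators,
the chain rule gives `Γ₂(θᵢ, P) = ∑ⱼ Γ₂(θᵢ, varⱼ) ∂ⱼP`. -/
theorem stmt6 (n : ℕ) (hn : 1 ≤ n) :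
    let R := MvPolynomial (Fin 3) ℝ
    let θ₁ : MvPolynomial (Fin 3) ℝ := X 0
    let θ₂ : MvPolynomial (Fin 3) ℝ := X 1
    let η : MvPolynomial (Fin 3) ℝ := X 2
    let N : MvPolynomial (Fin 3) ℝ := (n : MvPolynomial (Fin 3) ℝ)
    let g11 := 1 - θ₁ ^ 2
    let g12 := -N * θ₁ * θ₂
    let g13 := -N * θ₁ * η
    let g22 := N ^ 2 * ((1 - θ₁ ^ 2) ^ (n - 1) - θ₂ ^ 2)
    let g23 := -N ^ 2 * θ₂ * η
    let g33 := N ^ 2 * ((1 - θ₁ ^ 2) ^ (n - 1) - η ^ 2)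
    let P : MvPolynomial (Fin 3) ℝ := (1 - θ₁ ^ 2) ^ n - θ₂ ^ 2 - η ^ 2
    g11 * pderiv 0 P + g12 * pderiv 1 P + g13 * pderiv 2 P = -2 * N * θ₁ * P ∧
    g12 * pderiv 0 P + g22 * pderiv 1 P + g23 * pderiv 2 P = -2 * N ^ 2 * θ₂ * P ∧
    g13 * pderiv 0 P + g23 * pderiv 1 P + g33 * pderiv 2 P = -2 * N ^ 2 * η * P :=
  stmt6_general n
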